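/- arXiv:2306.17267 — 4 statements merged into one kernel-verified Lean document; each statement's English description precedes it below -/
import Mathlib

section
/- For a square row-stochastic matrix Q, the coefficient of ergodicity δ(Q) := max_j max_{i1,i2} |Q_{i1,j} - Q_{i2,j}| satisfies δ(Q) ≤ λ(Q), where λ(Q) := 1 - min_{i1,i2} Σ_j min(Q_{i1,j}, Q_{i2,j}). -/
open Matrix Finset

noncomputable def ergDelta {n : ℕ} (Q : Matrix (Fin n) (Fin n) ℝ) : ℝ :=
  ⨆ j, ⨆ i1, ⨆ i2, |Q i1 j - Q i2 j|

noncomputable def ergLambda {n : ℕ} (Q : Matrix (Fin n) (Fin n) ℝ) : ℝ :=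
  1 - ⨅ i1, ⨅ i2, ∑ j, min (Q i1 j) (Q i2 j)

def RowStochastic {n : ℕ} (Q : Matrix (Fin n) (Fin n) ℝ) : Prop :=
  (∀ i j, 0 ≤ Q i j) ∧ ∀ i, ∑ j, Q i j = 1

theorem stmt0 {n : ℕ} (hn : 0 < n) (Q : Matrix (Fin n) (Fin n) ℝ)
    (hQ : RowStochastic Q) : ergDelta Q ≤ ergLambda Q := by
  have : Nonempty (Fin n) := ⟨⟨0, hn⟩⟩
  unfold ergDelta ergLambda
  have key : ∀ i1 i2 j : Fin n,
      |Q i1 j - Q i2 j| ≤ 1 - ∑ j', min (Q i1 j') (Q i2 j') := by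
    intro i1 i2 j
    have aux : ∀ a b : Fin n, ∀ jj : Fin n,
        Q a jj - Q b jj ≤ 1 - ∑ j', min (Q a j') (Q b j') := by
      intro a b jj
      have h1 : Q a jj - Q b jj ≤ Q a jj - min (Q a jj) (Q b jj) := by
        have := min_le_right (Q a jj) (Q b jj); linarith
      have h2 : Q a jj - min (Q a jj) (Q b jj)
          ≤ ∑ j', (Q a j' - min (Q a j') (Q b j')) := by
        apply Finset.single_le_sum (f := fun j' => Q a j' - min (Q a j') (Q b j'))
        · intro k _; have := min_le_left (Q a k) (Q b k); linarith
        · exact Finset.mem_univ jj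
      have h3 : ∑ j', (Q a j' - min (Q a j') (Q b j'))
          = 1 - ∑ j', min (Q a j') (Q b j') := by
        rw [Finset.sum_sub_distrib, hQ.2 a]
      linarith
    rw [abs_sub_le_iff]
    constructor
    · exact aux i1 i2 j
    · have := aux i2 i1 j
      simp only [min_comm (Q i2 _) (Q i1 _)] at this
      exact this
  have hbdd : ∀ i1 : Fin n, BddBelow (Set.range fun i2 => ∑ j, min (Q i1 j) (Q i2 j)) :=
    fun i1 => Set.Finite.bddBelow (Set.finite_range _)
  have hinf : ∀ i1 i2 : Fin n,
      (⨅ i1, ⨅ i2, ∑ j, min (Q i1 j) (Q i2 j)) ≤ ∑ j, min (Q i1 j) (Q i2 j) := by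
    intro i1 i2
    refine le_trans (ciInf_le ?_ i1) (ciInf_le (hbdd i1) i2)
    exact Set.Finite.bddBelow (Set.finite_range _)
  refine ciSup_le fun j => ciSup_le fun i1 => ciSup_le fun i2 => ?_
  have := key i1 i2 j
  have := hinf i1 i2
  linarith
end

section
/- For any p square row-stochastic matrices Q[1],...,Q[p] of the same size, δ(Q[1]Q[2]···Q[p]) ≤ Π_{k=1}^p λ(Q[k]), where δ(A) := max_j max_{i1,i2} |A_{i1,j} - A_{i2,j}| and λ(A) := 1 - min_{i1,i2} Σ_j min(A_{i1,j}, A_{i2,j}). -/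
open Matrix Finset

/-!
Write the difference of two rows of `A * B` as `∑ₖ (A i₁ k - A i₂ k) (B k j - m)`, where `m` is
the least entry of column `j` of `B`; this is allowed because the coefficients sum to zero.
Only the positive coefficients contribute, their sum is at most `λ(A)`, and each
`B k j - m` is at most `δ(B)`. Hence `δ(A B) ≤ λ(A) δ(B)`, and induction on the number of factors
finishes, with `δ(1) ≤ 1` for the empty product.
-/

theorem sum_mul_le_sum_posPart_mul {ι : Type*} (s : Finset ι) {x y : ι → ℝ} {m d : ℝ}
    (hx : ∑ k ∈ s, x k = 0) (hm : ∀ k ∈ s, m ≤ y k) (hd : ∀ k ∈ s, y k - m ≤ d) :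
    ∑ k ∈ s, x k * y k ≤ (∑ k ∈ s, (x k)⁺) * d := by
  have hshift : ∑ k ∈ s, x k * y k = ∑ k ∈ s, x k * (y k - m) := by
    simp only [mul_sub, sum_sub_distrib, ← sum_mul, hx, zero_mul, sub_zero]
  rw [hshift, sum_mul]
  refine sum_le_sum fun k hk => ?_
  calc x k * (y k - m) ≤ (x k)⁺ * (y k - m) :=
        mul_le_mul_of_nonneg_right (le_posPart _) (sub_nonneg.2 (hm k hk))
    _ ≤ (x k)⁺ * d := mul_le_mul_of_nonneg_left (hd k hk) (posPart_nonneg _)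

namespace RowStochastic

variable {n : ℕ} {A B : Matrix (Fin n) (Fin n) ℝ}

theorem one : RowStochastic (1 : Matrix (Fin n) (Fin n) ℝ) :=
  ⟨fun i j => by by_cases h : i = j <;> simp [one_apply, h], fun i => by simp [one_apply]⟩

theorem mul (hA : RowStochastic A) (hB : RowStochastic B) : RowStochastic (A * B) := by
  simp only [RowStochastic, mul_apply]
  refine ⟨fun i j => sum_nonneg fun k _ => mul_nonneg (hA.1 i k) (hB.1 k j), fun i => ?_⟩
  rw [sum_comm]
  simp only [← mul_sum, hB.2, mul_one, hA.2]

theorem list_prod {L : List (Matrix (Fin n) (Fin n) ℝ)} (hL : ∀ A ∈ L, RowStochastic A) :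
    RowStochastic L.prod := by
  induction L with
  | nil => exact one
  | cons A L ih =>
    rw [List.forall_mem_cons] at hL
    exact hL.1.mul (ih hL.2)

theorem sum_sub_row_eq_zero (hA : RowStochastic A) (i₁ i₂ : Fin n) :
    ∑ k, (A i₁ k - A i₂ k) = 0 := by
  rw [sum_sub_distrib, hA.2, hA.2, sub_self]

theorem sum_posPart_sub_row_eq (hA : RowStochastic A) (i₁ i₂ : Fin n) :
    ∑ k, (A i₁ k - A i₂ k)⁺ = 1 - ∑ k, min (A i₁ k) (A i₂ k) := by
  rw [← hA.2 i₁, ← sum_sub_distrib]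
  refine sum_congr rfl fun k _ => ?_
  rcases le_total (A i₁ k) (A i₂ k) with h | h
  · simp [h]
  · simp [h]

theorem sum_posPart_sub_row_le_ergLambda (hA : RowStochastic A) (i₁ i₂ : Fin n) :
    ∑ k, (A i₁ k - A i₂ k)⁺ ≤ ergLambda A := by
  rw [hA.sum_posPart_sub_row_eq, ergLambda]
  gcongr
  exact (Finite.ciInf_le _ i₁).trans (Finite.ciInf_le _ i₂)

theorem ergLambda_nonneg (hA : RowStochastic A) : 0 ≤ ergLambda A := by
  cases isEmpty_or_nonempty (Fin n) with
  | inl _ => simp [ergLambda, Real.iInf_of_isEmpty]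
  | inr h =>
    obtain ⟨i⟩ := h
    simpa using hA.sum_posPart_sub_row_le_ergLambda i i

end RowStochastic

section ergDelta

variable {n : ℕ} {A B : Matrix (Fin n) (Fin n) ℝ}

theorem abs_sub_le_ergDelta (A : Matrix (Fin n) (Fin n) ℝ) (i₁ i₂ j : Fin n) :
    |A i₁ j - A i₂ j| ≤ ergDelta A :=
  (Finite.le_ciSup (fun i => |A i₁ j - A i j|) i₂).trans
    ((Finite.le_ciSup (fun i => ⨆ i', |A i j - A i' j|) i₁).trans
      (Finite.le_ciSup (fun j' => ⨆ i, ⨆ i', |A i j' - A i' j'|) j))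

theorem ergDelta_nonneg (A : Matrix (Fin n) (Fin n) ℝ) : 0 ≤ ergDelta A :=
  Real.iSup_nonneg fun _ => Real.iSup_nonneg fun _ => Real.iSup_nonneg fun _ => abs_nonneg _

theorem ergDelta_le_of_sub_le {c : ℝ} (hc : 0 ≤ c) (h : ∀ i₁ i₂ j, A i₁ j - A i₂ j ≤ c) :
    ergDelta A ≤ c :=
  Real.iSup_le (fun j => Real.iSup_le (fun i₁ => Real.iSup_le (fun i₂ =>
    abs_sub_le_iff.2 ⟨h i₁ i₂ j, h i₂ i₁ j⟩) hc) hc) hc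

theorem ergDelta_one_le : ergDelta (1 : Matrix (Fin n) (Fin n) ℝ) ≤ 1 :=
  ergDelta_le_of_sub_le zero_le_one fun i₁ i₂ j => by
    by_cases h₁ : i₁ = j <;> by_cases h₂ : i₂ = j <;> simp [one_apply, h₁, h₂]

theorem mul_apply_sub_le (hA : RowStochastic A) (i₁ i₂ j : Fin n) :
    (A * B) i₁ j - (A * B) i₂ j ≤ ergLambda A * ergDelta B := by
  obtain ⟨k₀, -, hk₀⟩ := exists_min_image univ (fun k => B k j) ⟨i₁, mem_univ _⟩
  calc (A * B) i₁ j - (A * B) i₂ j = ∑ k, (A i₁ k - A i₂ k) * B k j := by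
        simp only [mul_apply, sub_mul, sum_sub_distrib]
    _ ≤ (∑ k, (A i₁ k - A i₂ k)⁺) * ergDelta B :=
        sum_mul_le_sum_posPart_mul _ (hA.sum_sub_row_eq_zero i₁ i₂)
          (fun k _ => hk₀ k (mem_univ k))
          (fun k _ => (le_abs_self _).trans (abs_sub_le_ergDelta B k k₀ j))
    _ ≤ ergLambda A * ergDelta B :=
        mul_le_mul_of_nonneg_right (hA.sum_posPart_sub_row_le_ergLambda i₁ i₂)
          (ergDelta_nonneg B)

theorem ergDelta_mul_le (hA : RowStochastic A) :
    ergDelta (A * B) ≤ ergLambda A * ergDelta B :=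
  ergDelta_le_of_sub_le (mul_nonneg hA.ergLambda_nonneg (ergDelta_nonneg B))
    (mul_apply_sub_le hA)

theorem ergDelta_list_prod_le {L : List (Matrix (Fin n) (Fin n) ℝ)}
    (hL : ∀ A ∈ L, RowStochastic A) : ergDelta L.prod ≤ (L.map ergLambda).prod := by
  induction L with
  | nil => exact ergDelta_one_le
  | cons A L ih =>
    rw [List.forall_mem_cons] at hL
    rw [List.prod_cons, List.map_cons, List.prod_cons]
    calc ergDelta (A * L.prod) ≤ ergLambda A * ergDelta L.prod := ergDelta_mul_le hL.1
      _ ≤ ergLambda A * (L.map ergLambda).prod :=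
        mul_le_mul_of_nonneg_left (ih hL.2) hL.1.ergLambda_nonneg

end ergDelta

theorem stmt1_general {n p : ℕ} (Q : Fin p → Matrix (Fin n) (Fin n) ℝ)
    (hQ : ∀ k, RowStochastic (Q k)) :
    ergDelta (List.ofFn Q).prod ≤ ∏ k : Fin p, ergLambda (Q k) := by
  have h := ergDelta_list_prod_le (L := List.ofFn Q) (by simpa [List.mem_ofFn] using hQ)
  rwa [List.map_ofFn, List.prod_ofFn] at h

theorem stmt1 {n p : ℕ} (hn : 0 < n) (Q : Fin p → Matrix (Fin n) (Fin n) ℝ)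
    (hQ : ∀ k, RowStochastic (Q k)) :
    ergDelta (List.ofFn Q).prod ≤ ∏ k : Fin p, ergLambda (Q k) :=
  stmt1_general Q hQ
end

section
/- Let Ψ be a row-stochastic n×n matrix with every entry at least c > 0, let w_1,...,w_N ∈ ℝ^d (with N ≤ n, and w_{j'} = 0 for j' > N interpreted as only the first N columns of data being nonzero), and let z_j = Σ_{j'=1}^N w_{j'} Ψ_{j',j} and m_j = Σ_{j'=1}^N Ψ_{j',j}. Then for every j, ‖z_j/m_j − (1/N)Σ_{j'=1}^N w_{j'}‖ ≤ (Σ_{j'=1}^N ‖w_{j'}‖) · δ(Ψ) / (N c), where δ(Ψ) = max_j max_{i1,i2} |Ψ_{i1,j} − Ψ_{i2,j}|. -/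
open Matrix Finset

lemma le_ergDelta {n : ℕ} (Q : Matrix (Fin n) (Fin n) ℝ) (i1 i2 j : Fin n) :
    |Q i1 j - Q i2 j| ≤ ergDelta Q := by
  have h1 : |Q i1 j - Q i2 j| ≤ ⨆ i2, |Q i1 j - Q i2 j| :=
    le_ciSup (f := fun i2 => |Q i1 j - Q i2 j|) (Set.finite_range _).bddAbove i2
  have h2 : (⨆ i2, |Q i1 j - Q i2 j|) ≤ ⨆ i1, ⨆ i2, |Q i1 j - Q i2 j| :=
    le_ciSup (f := fun i1 => ⨆ i2, |Q i1 j - Q i2 j|) (Set.finite_range _).bddAbove i1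
  have h3 : (⨆ i1, ⨆ i2, |Q i1 j - Q i2 j|) ≤ ergDelta Q :=
    le_ciSup (f := fun j => ⨆ i1, ⨆ i2, |Q i1 j - Q i2 j|) (Set.finite_range _).bddAbove j
  exact h1.trans (h2.trans h3)

theorem stmt4 {n N d : ℕ} (hN : 0 < N) (hNn : N ≤ n)
    (Ψ : Matrix (Fin n) (Fin n) ℝ) (c : ℝ) (hc : 0 < c)
    (hΨ : RowStochastic Ψ) (hentry : ∀ i j, c ≤ Ψ i j)
    (w : Fin N → EuclideanSpace ℝ (Fin d))
    (z : Fin n → EuclideanSpace ℝ (Fin d)) (m : Fin n → ℝ)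
    (hz : ∀ j, z j = ∑ j' : Fin N, (Ψ (Fin.castLE hNn j') j) • w j')
    (hm : ∀ j, m j = ∑ j' : Fin N, Ψ (Fin.castLE hNn j') j) :
    ∀ j, ‖(m j)⁻¹ • z j - (N : ℝ)⁻¹ • ∑ j' : Fin N, w j'‖ ≤
      (∑ j' : Fin N, ‖w j'‖) * ergDelta Ψ / (N * c) := by
  intro j
  have hNpos : (0:ℝ) < N := by exact_mod_cast hN
  have hj0 : Fin n := ⟨0, lt_of_lt_of_le hN hNn⟩
  have hδ0 : 0 ≤ ergDelta Ψ := by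
    have := le_ergDelta Ψ hj0 hj0 hj0
    simpa using (abs_nonneg (Ψ hj0 hj0 - Ψ hj0 hj0)).trans this
  have hmge : (N:ℝ) * c ≤ m j := by
    rw [hm]
    calc (N:ℝ) * c = ∑ _j' : Fin N, c := by
          simp [Finset.sum_const, mul_comm]
      _ ≤ ∑ j' : Fin N, Ψ (Fin.castLE hNn j') j :=
          Finset.sum_le_sum (fun i _ => hentry _ _)
  have hmpos : 0 < m j := lt_of_lt_of_le (by positivity) hmge
  have key : (m j)⁻¹ • z j - (N : ℝ)⁻¹ • ∑ j' : Fin N, w j' =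
      ∑ j' : Fin N, ((m j)⁻¹ * Ψ (Fin.castLE hNn j') j - (N:ℝ)⁻¹) • w j' := by
    rw [hz, Finset.smul_sum, Finset.smul_sum, ← Finset.sum_sub_distrib]
    refine Finset.sum_congr rfl fun j' _ => ?_
    rw [smul_smul, sub_smul]
  have hcoef : ∀ j' : Fin N,
      |(m j)⁻¹ * Ψ (Fin.castLE hNn j') j - (N:ℝ)⁻¹| ≤ ergDelta Ψ / (N * c) := by
    intro j'
    set a := Ψ (Fin.castLE hNn j') j with ha
    have h1 : (N:ℝ) * a - m j = ∑ k : Fin N, (a - Ψ (Fin.castLE hNn k) j) := by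
      rw [hm, Finset.sum_sub_distrib]
      simp [Finset.sum_const, mul_comm]
    have h2 : |(N:ℝ) * a - m j| ≤ N * ergDelta Ψ := by
      rw [h1]
      calc |∑ k : Fin N, (a - Ψ (Fin.castLE hNn k) j)|
          ≤ ∑ k : Fin N, |a - Ψ (Fin.castLE hNn k) j| := Finset.abs_sum_le_sum_abs _ _
        _ ≤ ∑ _k : Fin N, ergDelta Ψ :=
            Finset.sum_le_sum (fun k _ => le_ergDelta Ψ _ _ _)
        _ = N * ergDelta Ψ := by simp [Finset.sum_const, mul_comm]
    have heq : (m j)⁻¹ * a - (N:ℝ)⁻¹ = ((N:ℝ) * a - m j) / ((N:ℝ) * m j) := by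
      field_simp
    rw [heq, abs_div, abs_of_pos (by positivity : (0:ℝ) < (N:ℝ) * m j)]
    calc |(N:ℝ) * a - m j| / ((N:ℝ) * m j)
        ≤ ((N:ℝ) * ergDelta Ψ) / ((N:ℝ) * m j) := by
          exact div_le_div_of_nonneg_right h2 (by positivity)
      _ = ergDelta Ψ / m j := by
          rw [mul_div_mul_left _ _ (ne_of_gt hNpos)]
      _ ≤ ergDelta Ψ / ((N:ℝ) * c) := by
          apply div_le_div_of_nonneg_left hδ0 (by positivity) hmge
  calc ‖(m j)⁻¹ • z j - (N : ℝ)⁻¹ • ∑ j' : Fin N, w j'‖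
      = ‖∑ j' : Fin N, ((m j)⁻¹ * Ψ (Fin.castLE hNn j') j - (N:ℝ)⁻¹) • w j'‖ := by
        rw [key]
    _ ≤ ∑ j' : Fin N, ‖((m j)⁻¹ * Ψ (Fin.castLE hNn j') j - (N:ℝ)⁻¹) • w j'‖ :=
        norm_sum_le _ _
    _ ≤ ∑ j' : Fin N, (ergDelta Ψ / (N * c)) * ‖w j'‖ := by
        refine Finset.sum_le_sum fun j' _ => ?_
        rw [norm_smul, Real.norm_eq_abs]
        exact mul_le_mul_of_nonneg_right (hcoef j') (norm_nonneg _)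
    _ = (∑ j' : Fin N, ‖w j'‖) * ergDelta Ψ / (N * c) := by
        rw [← Finset.mul_sum]
        ring
end

section
/- Let b ∈ (0,1) and define η[0] = 1 and η[r] = 1/r for r ≥ 1. If t ≥ t₀ := (2/log₂(1/b))·log₂(2/log₂(1/b)), then Σ_{r=0}^{t−1} η[r] b^{t−r} ≤ 4/((1−b)t). -/
/-!
Split the sum at `r ≈ t/4` and `r ≈ t/2`. On the three blocks `η r` is at most `1`, `4/t` and
`2/t`, while `b ^ (t - r)` is at most `b ^ (3t/4)`, `b ^ ((t+1)/2)` and `b`, and each block is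
dominated by its last geometric term divided by `1 - b`. The hypothesis `t ≥ t₀` says exactly
`b ^ (t/2) ≤ log₂(1/b) / 2`, and `x b ^ x ≤ e⁻¹ / ln(1/b)` controls `t b ^ (t/4)`. Altogether
`(1 - b) t` times the sum is at most `2b + 2√b log₂(1/b) + 2/(e ln 2)`, which stays below `4`:
with `b = w⁸` and `ln(1/w) ≤ 1/w - 1` this becomes a polynomial inequality in `w ∈ (0, 1)`.
-/

open Finset

noncomputable def eta : ℕ → ℝ := fun r => if r = 0 then 1 else 1 / r

open Real

lemma eta_le_one (r : ℕ) : eta r ≤ 1 := by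
  unfold eta
  split_ifs with hr
  · rfl
  · exact div_le_one_of_le₀ (by exact_mod_cast Nat.one_le_iff_ne_zero.2 hr) r.cast_nonneg

lemma eta_le_div {k t r : ℕ} (ht : 0 < t) (h : t ≤ k * r) : eta r ≤ k / t := by
  have hr : r ≠ 0 := by rintro rfl; omega
  rw [eta, if_neg hr, div_le_div_iff₀ (by positivity) (by exact_mod_cast ht)]
  exact_mod_cast (one_mul t).le.trans h

lemma one_sub_mul_sum_Ico_mul_pow_sub_le {K : Type*} [Field K] [LinearOrder K]
    [IsStrictOrderedRing K] {w : ℕ → K} {a b : K} {p q t : ℕ} (hb0 : 0 ≤ b) (hb1 : b < 1)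
    (ha : 0 ≤ a) (hq : q ≤ t + 1) (hw : ∀ r ∈ Ico p q, w r ≤ a) :
    (1 - b) * ∑ r ∈ Ico p q, w r * b ^ (t - r) ≤ a * b ^ (t + 1 - q) := by
  have hgeom : (1 - b) * ∑ j ∈ Ico (t + 1 - q) (t + 1 - p), b ^ j ≤ b ^ (t + 1 - q) := by
    have := geom_sum_Ico_le_of_lt_one (m := t + 1 - q) (n := t + 1 - p) hb0 hb1
    rwa [le_div_iff₀ (sub_pos.2 hb1), mul_comm] at this
  calc (1 - b) * ∑ r ∈ Ico p q, w r * b ^ (t - r)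
      ≤ (1 - b) * ∑ r ∈ Ico p q, a * b ^ (t - r) := by
        gcongr with r hr
        exact hw r hr
    _ = a * ((1 - b) * ∑ j ∈ Ico (t + 1 - q) (t + 1 - p), b ^ j) := by
        rw [← mul_sum, sum_Ico_reflect (fun j => b ^ j) p hq]; ring
    _ ≤ a * b ^ (t + 1 - q) := by gcongr

lemma one_sub_mul_mul_sum_eta_mul_pow_le {b : ℝ} (hb0 : 0 < b) (hb1 : b < 1) {t : ℕ}
    (ht : 0 < t) :
    (1 - b) * t * ∑ r ∈ range t, eta r * b ^ (t - r)
      ≤ t * b ^ (3 * t / 4 : ℝ) + 4 * b ^ ((t + 1) / 2 : ℝ) + 2 * b := by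
  have hsplit : ∑ r ∈ range t, eta r * b ^ (t - r)
      = ∑ r ∈ Ico 0 ((t + 3) / 4), eta r * b ^ (t - r)
        + ∑ r ∈ Ico ((t + 3) / 4) ((t + 1) / 2), eta r * b ^ (t - r)
        + ∑ r ∈ Ico ((t + 1) / 2) t, eta r * b ^ (t - r) := by
    rw [range_eq_Ico, sum_Ico_consecutive _ (Nat.zero_le _) (by omega),
      sum_Ico_consecutive _ (Nat.zero_le _) (by omega)]
  have h1 := one_sub_mul_sum_Ico_mul_pow_sub_le (w := eta) (p := 0) (q := (t + 3) / 4) (t := t)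
    hb0.le hb1 zero_le_one (by omega) fun r _ => eta_le_one r
  have h2 := one_sub_mul_sum_Ico_mul_pow_sub_le (w := eta) (p := (t + 3) / 4) (q := (t + 1) / 2)
    (t := t) (a := (4 : ℕ) / t) hb0.le hb1 (by positivity) (by omega)
    fun r hr => eta_le_div (k := 4) ht (by rw [mem_Ico] at hr; omega)
  have h3 := one_sub_mul_sum_Ico_mul_pow_sub_le (w := eta) (p := (t + 1) / 2) (q := t) (t := t)
    (a := (2 : ℕ) / t) hb0.le hb1 (by positivity) (by omega)
    fun r hr => eta_le_div (k := 2) ht (by rw [mem_Ico] at hr; omega)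
  rw [Nat.add_sub_cancel_left, pow_one] at h3
  push_cast at h2 h3
  have e1 : b ^ (t + 1 - (t + 3) / 4) ≤ b ^ (3 * t / 4 : ℝ) := by
    rw [← rpow_natCast]
    refine rpow_le_rpow_of_exponent_ge hb0 hb1.le ?_
    rw [div_le_iff₀ four_pos]
    exact_mod_cast (by omega : 3 * t ≤ (t + 1 - (t + 3) / 4) * 4)
  have e2 : b ^ (t + 1 - (t + 1) / 2) ≤ b ^ ((t + 1) / 2 : ℝ) := by
    rw [← rpow_natCast]
    refine rpow_le_rpow_of_exponent_ge hb0 hb1.le ?_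
    rw [div_le_iff₀ two_pos]
    exact_mod_cast (by omega : t + 1 ≤ (t + 1 - (t + 1) / 2) * 2)
  calc (1 - b) * t * ∑ r ∈ range t, eta r * b ^ (t - r)
      = t * ((1 - b) * ∑ r ∈ Ico 0 ((t + 3) / 4), eta r * b ^ (t - r))
        + t * ((1 - b) * ∑ r ∈ Ico ((t + 3) / 4) ((t + 1) / 2), eta r * b ^ (t - r))
        + t * ((1 - b) * ∑ r ∈ Ico ((t + 1) / 2) t, eta r * b ^ (t - r)) := by
        rw [hsplit]; ring
    _ ≤ t * (1 * b ^ (t + 1 - (t + 3) / 4)) + t * (4 / t * b ^ (t + 1 - (t + 1) / 2))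
        + t * (2 / t * b) := by gcongr
    _ = t * b ^ (t + 1 - (t + 3) / 4) + 4 * b ^ (t + 1 - (t + 1) / 2) + 2 * b := by
        field_simp
    _ ≤ t * b ^ (3 * t / 4 : ℝ) + 4 * b ^ ((t + 1) / 2 : ℝ) + 2 * b := by gcongr

lemma mul_rpow_le {b : ℝ} (hb0 : 0 < b) (hb1 : b < 1) (x : ℝ) :
    x * b ^ x ≤ exp (-1) / log (1 / b) := by
  have hL : 0 < log (1 / b) := log_pos (one_lt_one_div hb0 hb1)
  have hb : b ^ x = exp (-(log (1 / b) * x)) := by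
    rw [rpow_def_of_pos hb0, one_div, log_inv, neg_mul, neg_neg]
  rw [le_div_iff₀ hL, hb]
  linarith [mul_exp_neg_le_exp_neg_one (log (1 / b) * x)]

lemma rpow_div_two_le_of_le {b t : ℝ} (hb0 : 0 < b) (hb1 : b < 1)
    (ht : 2 / logb 2 (1 / b) * logb 2 (2 / logb 2 (1 / b)) ≤ t) :
    b ^ (t / 2) ≤ logb 2 (1 / b) / 2 := by
  set c := logb 2 (1 / b)
  have hc : 0 < c := logb_pos one_lt_two (one_lt_one_div hb0 hb1)
  have hlog : logb 2 (2 / c) ≤ c * t / 2 := by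
    calc logb 2 (2 / c) = c / 2 * (2 / c * logb 2 (2 / c)) := by field_simp
      _ ≤ c / 2 * t := by gcongr
      _ = c * t / 2 := by ring
  have hb : b = (2 ^ c)⁻¹ := by
    rw [rpow_logb two_pos (by norm_num) (by positivity), one_div, inv_inv]
  calc b ^ (t / 2) = (2 ^ (c * t / 2))⁻¹ := by
        rw [hb, inv_rpow (by positivity), ← rpow_mul zero_le_two, mul_div_assoc]
    _ ≤ (2 / c)⁻¹ :=
        inv_anti₀ (by positivity) ((logb_le_iff_le_rpow one_lt_two (by positivity)).1 hlog)
    _ = c / 2 := inv_div 2 c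

lemma mul_rpow_three_div_four_le {b t : ℝ} (hb0 : 0 < b) (hb1 : b < 1)
    (h : b ^ (t / 2) ≤ logb 2 (1 / b) / 2) : t * b ^ (3 * t / 4) ≤ 2 * exp (-1) / log 2 := by
  have hL : 0 < log (1 / b) := log_pos (one_lt_one_div hb0 hb1)
  have hdecay : t * b ^ (t / 4) ≤ 4 * (exp (-1) / log (1 / b)) := by
    linarith [mul_rpow_le hb0 hb1 (t / 4)]
  calc t * b ^ (3 * t / 4) = t * b ^ (t / 4) * b ^ (t / 2) := by
        rw [mul_assoc, ← rpow_add hb0]; ring_nf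
    _ ≤ 4 * (exp (-1) / log (1 / b)) * (logb 2 (1 / b) / 2) :=
        mul_le_mul hdecay h (by positivity) (by positivity)
    _ = 2 * exp (-1) / log 2 := by rw [logb]; field_simp; ring

-- `1.3863 ≥ 2 ln 2` and `2.0368 ≤ 4 ln 2 - 2/e`; the left side peaks near `1.87` at `w ≈ 0.8`.
lemma pow_eight_add_pow_three_mul_one_sub_le {w : ℝ} (hw0 : 0 ≤ w) (hw1 : w ≤ 1) :
    1.3863 * w ^ 8 + 16 * w ^ 3 * (1 - w) ≤ 2.0368 := by
  nlinarith [sq_nonneg (w - 0.72), sq_nonneg (w ^ 2 - 0.52), sq_nonneg (w ^ 3 - 0.38),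
    sq_nonneg (w ^ 4 - 0.27), mul_nonneg (sub_nonneg.2 hw1) hw0, mul_nonneg (mul_nonneg hw0 hw0) hw0,
    sq_nonneg (w ^ 4 - w ^ 3), mul_nonneg (sub_nonneg.2 hw1) (pow_nonneg hw0 3),
    mul_nonneg (sub_nonneg.2 hw1) (pow_nonneg hw0 6), sq_nonneg ((1 - w) * w ^ 3)]

lemma mul_log_one_div_le {w : ℝ} (hw : 0 < w) : w * log (1 / w) ≤ 1 - w := by
  calc w * log (1 / w) ≤ w * (1 / w - 1) :=
        mul_le_mul_of_nonneg_left (log_le_sub_one_of_pos (by positivity)) hw.le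
    _ = 1 - w := by field_simp

lemma two_mul_add_two_mul_sqrt_mul_logb_le {b : ℝ} (hb0 : 0 < b) (hb1 : b < 1) :
    2 * b + 2 * √b * logb 2 (1 / b) + 2 * exp (-1) / log 2 ≤ 4 := by
  obtain ⟨w, hw0, hw1, rfl⟩ : ∃ w, 0 < w ∧ w < 1 ∧ b = w ^ 8 :=
    ⟨b ^ (1 / 8 : ℝ), rpow_pos_of_pos hb0 _, rpow_lt_one hb0.le hb1 (by norm_num), by
      rw [← rpow_natCast, ← rpow_mul hb0.le]; norm_num⟩
  have hsqrt : √(w ^ 8) = w ^ 4 := by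
    rw [show w ^ 8 = (w ^ 4) ^ 2 by ring, sqrt_sq (by positivity)]
  have hlogb : logb 2 (1 / w ^ 8) = 8 * log (1 / w) / log 2 := by
    rw [logb, ← one_div_pow, log_pow]; push_cast; ring
  have hl : 0.6931471803 < log 2 := log_two_gt_d9
  have he : exp (-1) < 0.3678794412 := exp_neg_one_lt_d9
  have hterm : 16 * w ^ 4 * log (1 / w) ≤ 16 * w ^ 3 * (1 - w) := by
    have := mul_le_mul_of_nonneg_left (mul_log_one_div_le hw0) (by positivity : 0 ≤ 16 * w ^ 3)
    linarith
  have hbase : (4 - 2 * w ^ 8) * 0.6931471803 ≤ (4 - 2 * w ^ 8) * log 2 := by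
    have : w ^ 8 ≤ 1 := pow_le_one₀ hw0.le hw1.le
    gcongr; linarith
  have key : 16 * w ^ 4 * log (1 / w) + 2 * exp (-1) ≤ (4 - 2 * w ^ 8) * log 2 := by
    linarith [pow_eight_add_pow_three_mul_one_sub_le hw0.le hw1.le, pow_nonneg hw0.le 8]
  calc 2 * w ^ 8 + 2 * √(w ^ 8) * logb 2 (1 / w ^ 8) + 2 * exp (-1) / log 2
      = 2 * w ^ 8 + (16 * w ^ 4 * log (1 / w) + 2 * exp (-1)) / log 2 := by
        rw [hsqrt, hlogb]; ring
    _ ≤ 2 * w ^ 8 + (4 - 2 * w ^ 8) := by gcongr; rwa [div_le_iff₀ (by linarith)]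
    _ = 4 := by ring

theorem stmt10 (b : ℝ) (hb : b ∈ Set.Ioo (0 : ℝ) 1) (t : ℕ) (ht : 0 < t)
    (ht0 : (2 / Real.logb 2 (1 / b)) * Real.logb 2 (2 / Real.logb 2 (1 / b)) ≤ (t : ℝ)) :
    ∑ r ∈ Finset.range t, eta r * b ^ (t - r) ≤ 4 / ((1 - b) * t) := by
  obtain ⟨hb0, hb1⟩ := hb
  have hhalf := rpow_div_two_le_of_le hb0 hb1 ht0
  have hmid : b ^ (((t : ℝ) + 1) / 2) ≤ √b * (logb 2 (1 / b) / 2) := by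
    rw [add_div, rpow_add hb0, sqrt_eq_rpow, mul_comm]
    gcongr
  rw [le_div_iff₀ (mul_pos (sub_pos.2 hb1) (by exact_mod_cast ht))]
  linarith [one_sub_mul_mul_sum_eta_mul_pow_le hb0 hb1 ht,
    mul_rpow_three_div_four_le hb0 hb1 hhalf, two_mul_add_two_mul_sqrt_mul_logb_le hb0 hb1]
end
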